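/- Let n ≥ 1 and let a, b, c, d, e, f ∈ {1,…,n} be pairwise distinct. Then, as words over 𝒢_n, H_{c,f} H_{d,e} H_{f,e} H_{d,e} H_{c,f} H_{a,c} H_{b,d} H_{a,b} H_{b,d} H_{a,c} H_{a,f} H_{b,e} H_{a,b} H_{b,e} H_{a,f} ≈ H_{a,c} H_{b,d} H_{a,b} H_{b,d} H_{a,c}. -/

import Mathlib

open Matrix

noncomputable section

/-- `Z_a`: identity matrix except entry `(a,a)` is `-1`. -/
def Zmat (n : ℕ) (a : Fin n) : Matrix (Fin n) (Fin n) ℝ :=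
  fun i j => if i = j then (if i = a then -1 else 1) else 0

/-- `X_{b,c}`: the permutation matrix exchanging the `b`-th and `c`-th
standard basis vectors. -/
def Xmat (n : ℕ) (b c : Fin n) : Matrix (Fin n) (Fin n) ℝ :=
  fun i j => if j = Equiv.swap b c i then 1 else 0

/-- `H_{b,c}`: identity except entries `(b,b), (b,c), (c,b)` equal `1/√2`
and entry `(c,c)` equals `-1/√2`. -/
def Hmat (n : ℕ) (b c : Fin n) : Matrix (Fin n) (Fin n) ℝ :=
  fun i j =>
    if i = b ∧ j = b then 1 / Real.sqrt 2
    else if i = b ∧ j = c then 1 / Real.sqrt 2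
    else if i = c ∧ j = b then 1 / Real.sqrt 2
    else if i = c ∧ j = c then -(1 / Real.sqrt 2)
    else if i = j then 1 else 0

/-- Generators of `𝒢_n`. -/
inductive Gen (n : ℕ) : Type
  | Z : Fin n → Gen n
  | X : (b c : Fin n) → b ≠ c → Gen n
  | H : (b c : Fin n) → b ≠ c → Gen n

/-- Semantics of a generator. -/
def gsem {n : ℕ} : Gen n → Matrix (Fin n) (Fin n) ℝ
  | Gen.Z a => Zmat n a
  | Gen.X b c _ => Xmat n b c
  | Gen.H b c _ => Hmat n b c

/-- Semantics of a word (rightmost generator acts first). -/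
def wsem {n : ℕ} : List (Gen n) → Matrix (Fin n) (Fin n) ℝ
  | [] => 1
  | g :: w => gsem g * wsem w

/-- The smallest congruence `≈` on words over `𝒢_n` containing the relations
(a1)-(d4), (e1), (e2) of the paper. -/
inductive WRel (n : ℕ) : List (Gen n) → List (Gen n) → Prop
  | rel_zz (a : Fin n) : WRel n [Gen.Z a, Gen.Z a] []
  | rel_xx (a b : Fin n) (hab : a ≠ b) : WRel n [Gen.X a b hab, Gen.X a b hab] []
  | rel_hh (a b : Fin n) (hab : a ≠ b) : WRel n [Gen.H a b hab, Gen.H a b hab] []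
  | rel_zz_comm (a b : Fin n) (hab : a ≠ b) : WRel n [Gen.Z a, Gen.Z b] [Gen.Z b, Gen.Z a]
  | rel_zx_comm (a b c : Fin n) (hab : a ≠ b) (hac : a ≠ c) (hbc : b ≠ c) :
      WRel n [Gen.Z a, Gen.X b c hbc] [Gen.X b c hbc, Gen.Z a]
  | rel_xx_comm (a b c d : Fin n) (hab : a ≠ b) (hac : a ≠ c) (had : a ≠ d)
      (hbc : b ≠ c) (hbd : b ≠ d) (hcd : c ≠ d) :
      WRel n [Gen.X a b hab, Gen.X c d hcd] [Gen.X c d hcd, Gen.X a b hab]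
  | rel_zh_comm (a b c : Fin n) (hab : a ≠ b) (hac : a ≠ c) (hbc : b ≠ c) :
      WRel n [Gen.Z a, Gen.H b c hbc] [Gen.H b c hbc, Gen.Z a]
  | rel_xh_comm (a b c d : Fin n) (hab : a ≠ b) (hac : a ≠ c) (had : a ≠ d)
      (hbc : b ≠ c) (hbd : b ≠ d) (hcd : c ≠ d) :
      WRel n [Gen.X a b hab, Gen.H c d hcd] [Gen.H c d hcd, Gen.X a b hab]
  | rel_hh_comm (a b c d : Fin n) (hab : a ≠ b) (hac : a ≠ c) (had : a ≠ d)
      (hbc : b ≠ c) (hbd : b ≠ d) (hcd : c ≠ d) :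
      WRel n [Gen.H a b hab, Gen.H c d hcd] [Gen.H c d hcd, Gen.H a b hab]
  | rel_zx (a b : Fin n) (hab : a ≠ b) :
      WRel n [Gen.Z a, Gen.X a b hab] [Gen.X a b hab, Gen.Z b]
  | rel_xc2 (a b c : Fin n) (hab : a ≠ b) (hac : a ≠ c) (hbc : b ≠ c) :
      WRel n [Gen.X b c hbc, Gen.X a b hab] [Gen.X a b hab, Gen.X a c hac]
  | rel_xc3 (a b c : Fin n) (hab : a ≠ b) (hac : a ≠ c) (hbc : b ≠ c) :
      WRel n [Gen.X a c hac, Gen.X b c hbc] [Gen.X b c hbc, Gen.X a b hab]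
  | rel_hx4 (a b c : Fin n) (hab : a ≠ b) (hac : a ≠ c) (hbc : b ≠ c) :
      WRel n [Gen.H b c hbc, Gen.X a b hab] [Gen.X a b hab, Gen.H a c hac]
  | rel_hx5 (a b c : Fin n) (hab : a ≠ b) (hac : a ≠ c) (hbc : b ≠ c) :
      WRel n [Gen.H a c hac, Gen.X b c hbc] [Gen.X b c hbc, Gen.H a b hab]
  | rel_zzh (a b : Fin n) (hab : a ≠ b) :
      WRel n [Gen.Z a, Gen.Z b, Gen.H a b hab] [Gen.H a b hab, Gen.Z a, Gen.Z b]
  | rel_zh (a b : Fin n) (hab : a ≠ b) :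
      WRel n [Gen.Z b, Gen.H a b hab] [Gen.H a b hab, Gen.X a b hab]
  | rel_d3 (a b c d : Fin n) (hab : a ≠ b) (hac : a ≠ c) (had : a ≠ d)
      (hbc : b ≠ c) (hbd : b ≠ d) (hcd : c ≠ d) :
      WRel n
        ([Gen.H c d hcd, Gen.H a c hac, Gen.H b d hbd] ++
         [Gen.H c d hcd, Gen.H a c hac, Gen.H b d hbd] ++
         [Gen.H c d hcd, Gen.H a c hac, Gen.H b d hbd] ++
         [Gen.H c d hcd, Gen.H a c hac, Gen.H b d hbd])
        [Gen.H a b hab, Gen.H c d hcd]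
  | rel_d4 (a b c d e f : Fin n) (hab : a ≠ b) (hac : a ≠ c) (had : a ≠ d)
      (hae : a ≠ e) (haf : a ≠ f) (hbc : b ≠ c) (hbd : b ≠ d) (hbe : b ≠ e)
      (hbf : b ≠ f) (hcd : c ≠ d) (hce : c ≠ e) (hcf : c ≠ f) (hde : d ≠ e)
      (hdf : d ≠ f) (hef : e ≠ f) :
      WRel n
        ([Gen.H a c hac, Gen.H b d hbd, Gen.H a b hab, Gen.H a c hac,
          Gen.H b d hbd, Gen.X c e hce, Gen.X d f hdf] ++
         [Gen.H a c hac, Gen.H b d hbd, Gen.H a b hab, Gen.H a c hac,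
          Gen.H b d hbd, Gen.X c e hce, Gen.X d f hdf] ++
         [Gen.H a c hac, Gen.H b d hbd, Gen.H a b hab, Gen.H a c hac,
          Gen.H b d hbd, Gen.X c e hce, Gen.X d f hdf])
        [Gen.H c e hce, Gen.H d f hdf, Gen.H e f hef, Gen.H c e hce,
         Gen.H d f hdf, Gen.X c e hce, Gen.X d f hdf]
  | rel_x_swap (b c : Fin n) (hbc : b ≠ c) :
      WRel n [Gen.X c b (Ne.symm hbc)] [Gen.X b c hbc]
  | rel_h_swap (b c : Fin n) (hbc : b ≠ c) :
      WRel n [Gen.H c b (Ne.symm hbc)] [Gen.X b c hbc, Gen.H b c hbc, Gen.X b c hbc]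
  | refl (w : List (Gen n)) : WRel n w w
  | symm {u v : List (Gen n)} : WRel n u v → WRel n v u
  | trans {u v w : List (Gen n)} : WRel n u v → WRel n v w → WRel n u w
  | append_left (w : List (Gen n)) {u v : List (Gen n)} :
      WRel n u v → WRel n (w ++ u) (w ++ v)
  | append_right (w : List (Gen n)) {u v : List (Gen n)} :
      WRel n u v → WRel n (u ++ w) (v ++ w)

/-- Membership in the ring `ℤ[√2] ⊆ ℝ`. -/
def inZsqrt2 (x : ℝ) : Prop := ∃ a b : ℤ, x = (a : ℝ) + (b : ℝ) * Real.sqrt 2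

/-- Membership in the ring `ℤ[1/√2] ⊆ ℝ`. -/
def inZinvsqrt2 (x : ℝ) : Prop := ∃ k : ℕ, inZsqrt2 (Real.sqrt 2 ^ k * x)

/-- `u ≡ v (mod 2)`, i.e. `(u - v)/2 ∈ ℤ[√2]`. -/
def cong2 (u v : ℝ) : Prop := inZsqrt2 ((u - v) / 2)

/-- Least denominator exponent of a scalar. -/
def lde (x : ℝ) : ℕ := sInf {k : ℕ | inZsqrt2 (Real.sqrt 2 ^ k * x)}

/-- Least denominator exponent of a vector. -/
def ldeVec {m : ℕ} (v : Fin m → ℝ) : ℕ :=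
  sInf {k : ℕ | ∀ i, inZsqrt2 (Real.sqrt 2 ^ k * v i)}

/-- The largest (1-based) index `j` such that the `j`-th column of `M` differs
from the `j`-th standard basis vector (`0` if `M` is the identity). -/
def levelJ {n : ℕ} (M : Matrix (Fin n) (Fin n) ℝ) : ℕ :=
  sSup {m : ℕ | ∃ i : Fin n, m = (i : ℕ) + 1 ∧
    ∃ r : Fin n, M r i ≠ (if r = i then (1 : ℝ) else 0)}

/-- The `levelJ M`-th column of `M` (junk if `n = 0`). -/
def levelCol {n : ℕ} (M : Matrix (Fin n) (Fin n) ℝ) : Fin n → ℝ :=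
  fun r => if h : levelJ M - 1 < n then M r ⟨levelJ M - 1, h⟩ else 0

/-- The level `(j, k, l)` of a matrix, as an element of `ℕ ×ₗ (ℕ ×ₗ ℕ)`
(lexicographic order). -/
def level {n : ℕ} (M : Matrix (Fin n) (Fin n) ℝ) : ℕ ×ₗ (ℕ ×ₗ ℕ) :=
  if levelJ M = 0 then toLex (0, toLex (0, 0))
  else if ldeVec (levelCol M) = 0 then toLex (levelJ M, toLex (0, 0))
  else
    toLex (levelJ M, toLex (ldeVec (levelCol M),
      Nat.card {i : Fin n //
        cong2 (Real.sqrt 2 ^ ldeVec (levelCol M) * levelCol M i) 1 ∨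
        cong2 (Real.sqrt 2 ^ ldeVec (levelCol M) * levelCol M i) (1 + Real.sqrt 2)}))

/-- The level of the sequence of intermediate states obtained by applying the
generators of a word (rightmost first) to a state `s`: the maximum of the
levels of all intermediate states. -/
def seqLevel {n : ℕ} : List (Gen n) → Matrix (Fin n) (Fin n) ℝ → ℕ ×ₗ (ℕ ×ₗ ℕ)
  | [], s => level s
  | g :: w, s => max (level (gsem g * (wsem w * s))) (seqLevel w s)

/-- The basic generators `𝒢'_n = {X_{1,x} : 2 ≤ x ≤ n} ∪ {Z_1, H_{1,2}}`
(written with 1-based indices). -/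
def Gen.isBasic {n : ℕ} : Gen n → Prop
  | Gen.Z a => (a : ℕ) = 0
  | Gen.X b _ _ => (b : ℕ) = 0
  | Gen.H b c _ => (b : ℕ) = 0 ∧ (c : ℕ) = 1

/-- A generator with ordered indices (`b < c` for `X_{b,c}` and `H_{b,c}`). -/
def Gen.ordered {n : ℕ} : Gen n → Prop
  | Gen.Z _ => True
  | Gen.X b c _ => b < c
  | Gen.H b c _ => b < c


/-!
Relation (d4), with `e` and `f` exchanged and commuting factors reordered, says
`(A X)³ ≈ C X`, where `A = H_{a,c} H_{b,d} H_{a,b} H_{b,d} H_{a,c}`,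
`C = H_{c,f} H_{d,e} H_{f,e} H_{d,e} H_{c,f}` and `X = X_{c,f} X_{d,e}`. Conjugation by the
involution `X` relabels `c ↦ f`, `d ↦ e`, turning `A` into
`B = H_{a,f} H_{b,e} H_{a,b} H_{b,e} H_{a,f}`; hence `C ≈ A X A X A X X ≈ A B A`, and since `A`
and `B` are involutions, `C A B ≈ A`.
-/

section Monoid

variable {M : Type*} [Monoid M]

theorem mul_mul_cancel_of_mul_self_eq_one {s : M} (hs : s * s = 1) (t : M) :
    s * (s * t) = t := by
  rw [← mul_assoc, hs, one_mul]

theorem palindrome_mul_self {p q r : M} (hp : p * p = 1) (hq : q * q = 1) (hr : r * r = 1) :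
    p * q * r * q * p * (p * q * r * q * p) = 1 := by
  simp only [mul_assoc, mul_mul_cancel_of_mul_self_eq_one hp, mul_mul_cancel_of_mul_self_eq_one hq,
    mul_mul_cancel_of_mul_self_eq_one hr, hp]

theorem mul_mul_eq_of_pow_three_eq {x u u' c : M} (hx : x * x = 1) (hu : u * u = 1)
    (hxu : SemiconjBy x u u') (h : (u * x) ^ 3 = c * x) : c * u * u' = u := by
  have hu' : u' = x * u * x := by rw [hxu.eq, mul_assoc, hx, mul_one]
  have hu'u' : u' * u' = 1 := by
    simp only [hu', mul_assoc, mul_mul_cancel_of_mul_self_eq_one hx,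
      mul_mul_cancel_of_mul_self_eq_one hu, hx]
  have hc : c = u * u' * u :=
    calc c = (u * x) ^ 3 * x := by rw [h, mul_assoc, hx, mul_one]
      _ = u * (x * u) * x * u * (x * x) := by simp only [pow_succ, pow_zero, one_mul, mul_assoc]
      _ = u * u' * u := by
        rw [hxu.eq, hx]
        simp only [mul_assoc, mul_mul_cancel_of_mul_self_eq_one hx, mul_one]
  rw [hc, mul_assoc (u * u'), hu, mul_one, mul_assoc, hu'u', mul_one]

end Monoid

def wordCon (n : ℕ) : Con (FreeMonoid (Gen n)) where
  r u v := WRel n u.toList v.toList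
  iseqv := ⟨fun _ => .refl _, .symm, .trans⟩
  mul' h₁ h₂ := by
    simpa only [FreeMonoid.toList_mul] using (h₁.append_right _).trans (h₂.append_left _)

abbrev WordMonoid (n : ℕ) := (wordCon n).Quotient

namespace WordMonoid

variable {n : ℕ}

def mk (w : List (Gen n)) : WordMonoid n := (FreeMonoid.ofList w : FreeMonoid (Gen n))

def gen (g : Gen n) : WordMonoid n := mk [g]

theorem mk_eq_mk {u v : List (Gen n)} : mk u = mk v ↔ WRel n u v := Con.eq _

theorem mk_nil : mk ([] : List (Gen n)) = 1 := rfl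

theorem mk_append (u v : List (Gen n)) : mk (u ++ v) = mk u * mk v := rfl

theorem mk_cons (g : Gen n) (w : List (Gen n)) : mk (g :: w) = gen g * mk w := rfl

theorem gen_mul_gen_eq {g₁ g₂ g₁' g₂' : Gen n} (h : WRel n [g₁, g₂] [g₁', g₂']) :
    gen g₁ * gen g₂ = gen g₁' * gen g₂' :=
  mk_eq_mk.2 h

variable {a b c d e f : Fin n}

theorem gen_H_mul_self (hab : a ≠ b) : gen (.H a b hab) * gen (.H a b hab) = 1 :=
  mk_eq_mk.2 (.rel_hh a b hab)

theorem gen_X_mul_self (hab : a ≠ b) : gen (.X a b hab) * gen (.X a b hab) = 1 :=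
  mk_eq_mk.2 (.rel_xx a b hab)

theorem commute_gen_H_gen_H (hab : a ≠ b) (hac : a ≠ c) (had : a ≠ d) (hbc : b ≠ c)
    (hbd : b ≠ d) (hcd : c ≠ d) : Commute (gen (.H a b hab)) (gen (.H c d hcd)) :=
  gen_mul_gen_eq (.rel_hh_comm a b c d hab hac had hbc hbd hcd)

theorem commute_gen_X_gen_H (hab : a ≠ b) (hac : a ≠ c) (had : a ≠ d) (hbc : b ≠ c)
    (hbd : b ≠ d) (hcd : c ≠ d) : Commute (gen (.X a b hab)) (gen (.H c d hcd)) :=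
  gen_mul_gen_eq (.rel_xh_comm a b c d hab hac had hbc hbd hcd)

theorem commute_gen_X_gen_X (hab : a ≠ b) (hac : a ≠ c) (had : a ≠ d) (hbc : b ≠ c)
    (hbd : b ≠ d) (hcd : c ≠ d) : Commute (gen (.X a b hab)) (gen (.X c d hcd)) :=
  gen_mul_gen_eq (.rel_xx_comm a b c d hab hac had hbc hbd hcd)

theorem semiconjBy_gen_X_gen_H (hab : a ≠ b) (hac : a ≠ c) (hbc : b ≠ c) :
    SemiconjBy (gen (.X b c hbc)) (gen (.H a b hab)) (gen (.H a c hac)) :=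
  (gen_mul_gen_eq (.rel_hx5 a b c hab hac hbc)).symm

theorem pow_three_eq_of_rel_d4 (hab : a ≠ b) (hac : a ≠ c) (had : a ≠ d)
    (hae : a ≠ e) (haf : a ≠ f) (hbc : b ≠ c) (hbd : b ≠ d) (hbe : b ≠ e)
    (hbf : b ≠ f) (hcd : c ≠ d) (hce : c ≠ e) (hcf : c ≠ f) (hde : d ≠ e)
    (hdf : d ≠ f) (hef : e ≠ f) :
    (gen (.H a c hac) * gen (.H b d hbd) * gen (.H a b hab) * gen (.H b d hbd) * gen (.H a c hac) *
        (gen (.X c e hce) * gen (.X d f hdf))) ^ 3 =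
      gen (.H c e hce) * gen (.H d f hdf) * gen (.H e f hef) * gen (.H d f hdf) * gen (.H c e hce) *
        (gen (.X c e hce) * gen (.X d f hdf)) := by
  rw [(commute_gen_H_gen_H hbd hab.symm hbc had.symm hcd.symm hac).right_comm,
    (commute_gen_H_gen_H hdf hcd.symm hde hcf.symm hef.symm hce).right_comm]
  simpa only [mk_append, mk_cons, mk_nil, pow_succ, pow_zero, one_mul, mul_one, mul_assoc] using
    mk_eq_mk.2 (.rel_d4 a b c d e f hab hac had hae haf hbc hbd hbe hbf hcd hce hcf hde hdf hef)

theorem semiconjBy_gen_X_mul_gen_X (hab : a ≠ b) (hac : a ≠ c) (had : a ≠ d)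
    (hae : a ≠ e) (haf : a ≠ f) (hbc : b ≠ c) (hbd : b ≠ d) (hbe : b ≠ e)
    (hbf : b ≠ f) (hcd : c ≠ d) (hce : c ≠ e) (hcf : c ≠ f) (hdf : d ≠ f)
    (hef : e ≠ f) :
    SemiconjBy (gen (.X c e hce) * gen (.X d f hdf))
      (gen (.H a c hac) * gen (.H b d hbd) * gen (.H a b hab) * gen (.H b d hbd) *
        gen (.H a c hac))
      (gen (.H a e hae) * gen (.H b f hbf) * gen (.H a b hab) * gen (.H b f hbf) *
        gen (.H a e hae)) := by
  refine SemiconjBy.mul_left (y := gen (.H a c hac) * gen (.H b f hbf) * gen (.H a b hab) *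
    gen (.H b f hbf) * gen (.H a c hac)) ?_ ?_
  · have hac' := semiconjBy_gen_X_gen_H hac hae hce
    have hbf' : SemiconjBy _ _ _ := commute_gen_X_gen_H hce hbc.symm hcf hbe.symm hef hbf
    have hab' : SemiconjBy _ _ _ :=
      commute_gen_X_gen_H hce hac.symm hbc.symm hae.symm hbe.symm hab
    exact (((hac'.mul_right hbf').mul_right hab').mul_right hbf').mul_right hac'
  · have hac' : SemiconjBy _ _ _ :=
      commute_gen_X_gen_H hdf had.symm hcd.symm haf.symm hcf.symm hac
    have hbd' := semiconjBy_gen_X_gen_H hbd hbf hdf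
    have hab' : SemiconjBy _ _ _ :=
      commute_gen_X_gen_H hdf had.symm hbd.symm haf.symm hbf.symm hab
    exact (((hac'.mul_right hbd').mul_right hab').mul_right hbd').mul_right hac'

theorem mul_self_gen_X_mul_gen_X (hab : a ≠ b) (hac : a ≠ c) (had : a ≠ d) (hbc : b ≠ c)
    (hbd : b ≠ d) (hcd : c ≠ d) :
    gen (.X a b hab) * gen (.X c d hcd) * (gen (.X a b hab) * gen (.X c d hcd)) = 1 := by
  rw [(commute_gen_X_gen_X hcd hac.symm hbc.symm had.symm hbd.symm hab).mul_mul_mul_comm,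
    gen_X_mul_self, gen_X_mul_self, one_mul]

end WordMonoid

theorem prop_h2_general (n : ℕ) (a b c d e f : Fin n)
    (hab : a ≠ b) (hac : a ≠ c) (had : a ≠ d) (hae : a ≠ e) (haf : a ≠ f)
    (hbc : b ≠ c) (hbd : b ≠ d) (hbe : b ≠ e) (hbf : b ≠ f)
    (hcd : c ≠ d) (hce : c ≠ e) (hcf : c ≠ f)
    (hde : d ≠ e) (hdf : d ≠ f) (hef : e ≠ f) :
    WRel n
      [Gen.H c f hcf, Gen.H d e hde, Gen.H f e (Ne.symm hef), Gen.H d e hde, Gen.H c f hcf, Gen.H a c hac, Gen.H b d hbd, Gen.H a b hab, Gen.H b d hbd, Gen.H a c hac, Gen.H a f haf, Gen.H b e hbe, Gen.H a b hab, Gen.H b e hbe, Gen.H a f haf]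
      [Gen.H a c hac, Gen.H b d hbd, Gen.H a b hab, Gen.H b d hbd, Gen.H a c hac] := by
  open WordMonoid in
  have hA := palindrome_mul_self (gen_H_mul_self hac) (gen_H_mul_self hbd) (gen_H_mul_self hab)
  have key := mul_mul_eq_of_pow_three_eq
    (mul_self_gen_X_mul_gen_X hcf hcd hce hdf.symm hef.symm hde) hA
    (semiconjBy_gen_X_mul_gen_X hab hac had haf hae hbc hbd hbf hbe hcd hcf hce hde hef.symm)
    (pow_three_eq_of_rel_d4 hab hac had haf hae hbc hbd hbf hbe hcd hcf hce hdf hde hef.symm)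
  rw [← mk_eq_mk]
  simpa only [mk_cons, mk_nil, mul_one, mul_assoc] using key

theorem prop_h2 (n : ℕ) (hn : 1 ≤ n) (a b c d e f : Fin n)
    (hab : a ≠ b) (hac : a ≠ c) (had : a ≠ d) (hae : a ≠ e) (haf : a ≠ f)
    (hbc : b ≠ c) (hbd : b ≠ d) (hbe : b ≠ e) (hbf : b ≠ f)
    (hcd : c ≠ d) (hce : c ≠ e) (hcf : c ≠ f)
    (hde : d ≠ e) (hdf : d ≠ f) (hef : e ≠ f) :
    WRel n
      [Gen.H c f hcf, Gen.H d e hde, Gen.H f e (Ne.symm hef), Gen.H d e hde, Gen.H c f hcf, Gen.H a c hac, Gen.H b d hbd, Gen.H a b hab, Gen.H b d hbd, Gen.H a c hac, Gen.H a f haf, Gen.H b e hbe, Gen.H a b hab, Gen.H b e hbe, Gen.H a f haf]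
      [Gen.H a c hac, Gen.H b d hbd, Gen.H a b hab, Gen.H b d hbd, Gen.H a c hac] :=
  prop_h2_general n a b c d e f hab hac had hae haf hbc hbd hbe hbf hcd hce hcf hde hdf hef
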